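/- Let [X,B,m,ν] be a reversible random walk space and let Ω ∈ B with Ω and Ω_m m-connected, 0 < ν(Ω) < ν(Ω_m) < ∞, and such that Ω satisfies a 2-Poincaré inequality. Let Q_Ω^m(t) = Σ_{k=0}^∞ g_{m,Ω}(k) e^{−t} t^k / k! for t ≥ 0 (the spectral m-heat content of Ω). Then T_m(Ω) = ∫_0^∞ Q_Ω^m(t) dt and T_m(Ω) = Σ_{k=0}^∞ g_{m,Ω}(k). -/

import Mathlib

open MeasureTheory ENNReal Filter Topology

namespace RandomWalkSpace

variable {X : Type*} [MeasurableSpace X]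

/-- A random walk: a family of probability measures `m x`, measurably depending on `x`. -/
def IsRandomWalk (m : X → Measure X) : Prop :=
  (∀ x, IsProbabilityMeasure (m x)) ∧
    ∀ A : Set X, MeasurableSet A → Measurable fun x => m x A

/-- Reversibility (detailed balance) of `ν` with respect to the random walk `m`. -/
def Reversible (m : X → Measure X) (ν : Measure X) : Prop :=
  ∀ A B : Set X, MeasurableSet A → MeasurableSet B →
    ∫⁻ x in A, m x B ∂ν = ∫⁻ x in B, m x A ∂ν

/-- The `m`-boundary of `Ω`. -/
def mBoundary (m : X → Measure X) (Ω : Set X) : Set X :=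
  {x | x ∉ Ω ∧ 0 < m x Ω}

/-- The `m`-closure of `Ω`. -/
def mClosure (m : X → Measure X) (Ω : Set X) : Set X :=
  Ω ∪ mBoundary m Ω

/-- `D` is `m`-connected (with respect to `ν`). -/
def mConnected (m : X → Measure X) (ν : Measure X) (D : Set X) : Prop :=
  ∀ A B : Set X, MeasurableSet A → MeasurableSet B → A ⊆ D → B ⊆ D →
    A ∪ B = D → 0 < ν A → 0 < ν B → 0 < ∫⁻ x in A, m x B ∂ν

/-- The `m`-perimeter of `Ω`. -/
noncomputable def mPerimeter (m : X → Measure X) (ν : Measure X) (Ω : Set X) : ℝ≥0∞ :=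
  ∫⁻ x in Ω, m x Ωᶜ ∂ν

/-- `survival m Ω n x` is the mass of paths of `n` jumps starting at `x` that stay in `Ω`. -/
noncomputable def survival (m : X → Measure X) (Ω : Set X) : ℕ → X → ℝ≥0∞
  | 0, _ => 1
  | n + 1, x => ∫⁻ y in Ω, survival m Ω n y ∂(m x)

/-- `gseq m ν Ω n` is the mass of paths of `n` jumps that start in `Ω` and stay in `Ω`. -/
noncomputable def gseq (m : X → Measure X) (ν : Measure X) (Ω : Set X) (n : ℕ) : ℝ≥0∞ :=
  ∫⁻ x in Ω, survival m Ω n x ∂ν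

/-- The spectral `m`-heat content of `Ω` at time `t`. -/
noncomputable def heatContent (m : X → Measure X) (ν : Measure X) (Ω : Set X) (t : ℝ) : ℝ≥0∞ :=
  ∑' k : ℕ, gseq m ν Ω k * ENNReal.ofReal (Real.exp (-t) * t ^ k / (Nat.factorial k))

/-- The nonlocal `p`-energy `∫_{Ω_m×Ω_m} |f(y) − f(x)|^p dm_x(y)dν(x)`. -/
noncomputable def energy (m : X → Measure X) (ν : Measure X) (Ω : Set X) (p : ℝ)
    (f : X → ℝ) : ℝ≥0∞ :=
  ∫⁻ x in mClosure m Ω, ∫⁻ y in mClosure m Ω, ENNReal.ofReal (|f y - f x| ^ p) ∂(m x) ∂ν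

/-- `f ∈ L^p_0(Ω_m,ν)`: `f ∈ L^p(Ω_m,ν)` and `f = 0` ν-a.e. on `∂_m Ω`. -/
def InLp0 (m : X → Measure X) (ν : Measure X) (Ω : Set X) (p : ℝ) (f : X → ℝ) : Prop :=
  MemLp f (ENNReal.ofReal p) (ν.restrict (mClosure m Ω)) ∧
    ∀ᵐ x ∂ν.restrict (mBoundary m Ω), f x = 0

/-- `Ω` satisfies a `p`-Poincaré inequality. -/
def PoincareInequality (m : X → Measure X) (ν : Measure X) (Ω : Set X) (p : ℝ) : Prop :=
  ∃ lam : ℝ, 0 < lam ∧ ∀ f : X → ℝ, InLp0 m ν Ω p f →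
    ENNReal.ofReal lam * ∫⁻ x in Ω, ENNReal.ofReal (|f x| ^ p) ∂ν ≤ energy m ν Ω p f

/-- The `m`-stress function of `Ω`. -/
def IsStressFunction (m : X → Measure X) (ν : Measure X) (Ω : Set X) (f : X → ℝ) : Prop :=
  InLp0 m ν Ω 2 f ∧ (∀ᵐ x ∂ν.restrict (mClosure m Ω), 0 ≤ f x) ∧
    ∀ᵐ x ∂ν.restrict Ω, -∫ y in mClosure m Ω, (f y - f x) ∂(m x) = 1

/-- The `p`-torsion function of `Ω`. -/
def IsPStressFunction (m : X → Measure X) (ν : Measure X) (Ω : Set X) (p : ℝ)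
    (f : X → ℝ) : Prop :=
  InLp0 m ν Ω p f ∧ (∀ᵐ x ∂ν.restrict (mClosure m Ω), 0 ≤ f x) ∧
    ∀ᵐ x ∂ν.restrict Ω,
      -∫ y in mClosure m Ω, |f y - f x| ^ (p - 2) * (f y - f x) ∂(m x) = 1

/-- The Rayleigh quotient infimum `λ_{m,p}(Ω)`. -/
noncomputable def rayleigh (m : X → Measure X) (ν : Measure X) (Ω : Set X) (p : ℝ) : ℝ≥0∞ :=
  ⨅ (f : X → ℝ) (_ : InLp0 m ν Ω p f)
    (_ : 0 < ∫⁻ x in Ω, ENNReal.ofReal (|f x| ^ p) ∂ν),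
    (energy m ν Ω p f / 2) / ∫⁻ x in Ω, ENNReal.ofReal (|f x| ^ p) ∂ν

/-- The `m`-Cheeger constant `h_1^m(Ω)`. -/
noncomputable def cheeger1 (m : X → Measure X) (ν : Measure X) (Ω : Set X) : ℝ≥0∞ :=
  ⨅ (E : Set X) (_ : MeasurableSet E) (_ : E ⊆ Ω) (_ : 0 < ν E),
    mPerimeter m ν E / ν E

/-- The `m`-`p`-Cheeger constant `h_p^m(Ω)`. -/
noncomputable def cheegerP (m : X → Measure X) (ν : Measure X) (Ω : Set X) (p : ℝ) : ℝ≥0∞ :=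
  ⨅ (E : Set X) (_ : MeasurableSet E) (_ : E ⊆ Ω) (_ : 0 < ν E),
    mPerimeter m ν E / ν E ^ p

/-- The functional `F_{m,p}(f) = (1/(2p)) ∫∫ |∇f|^p − ∫_Ω f`, with values in `EReal`. -/
noncomputable def torsionalFunctional (m : X → Measure X) (ν : Measure X) (Ω : Set X)
    (p : ℝ) (f : X → ℝ) : EReal :=
  ((energy m ν Ω p f / ENNReal.ofReal (2 * p) : ℝ≥0∞) : EReal) -
    ((∫ x in Ω, f x ∂ν : ℝ) : EReal)

end RandomWalkSpace

/-!
Let `P ψ (x) = ∫_Ω ψ dm_x` be the walk killed on leaving `Ω`, so that `g(k) = ∫_Ω Pᵏ 1`. The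
stress equation says `f = 1 + P f` on `Ω`; iterating, `∫_Ω f = Σ_{k<n} g(k) + ∫_Ω Pⁿ f`, and by
reversibility `∫_Ω Pⁿ f = ∫_Ω f · Pⁿ 1`. The survival probabilities `Pⁿ 1` decrease to a
`P`-invariant `s`, and the energy of `1_Ω s` equals `2 ∫_Ω s (s - P s) = 0`; the Poincaré inequality
forces `s = 0` on `Ω`, so the remainder tends to `0` and `∫_Ω f = Σ_k g(k)`. The heat-content
identity is term-by-term integration, each weight `e^{-t} t^k / k!` having integral `Γ(k+1)/k! = 1`.
-/

open ProbabilityTheory Set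

theorem ENNReal.tsum_eq_of_eq_sum_range_add {g r : ℕ → ℝ≥0∞} {C : ℝ≥0∞}
    (h : ∀ n, C = ∑ k ∈ Finset.range n, g k + r n) (hr : ⨅ n, r n = 0) : ∑' k, g k = C := by
  refine le_antisymm ?_ ?_
  · rw [ENNReal.tsum_eq_iSup_nat]
    exact iSup_le fun n => (h n).symm ▸ le_self_add
  · calc C ≤ ⨅ n, (∑' k, g k + r n) :=
          le_iInf fun n => (h n).trans_le (by gcongr; exact ENNReal.sum_le_tsum _)
      _ = ∑' k, g k := by rw [← ENNReal.add_iInf, hr, add_zero]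

theorem ENNReal.ofReal_abs_toReal_sub_rpow_two_add {a b : ℝ≥0∞} (ha : a ≠ ⊤) (hb : b ≠ ⊤) :
    ENNReal.ofReal (|b.toReal - a.toReal| ^ (2 : ℝ)) + 2 * (a * b) = a ^ 2 + b ^ 2 := by
  obtain ⟨x, hx, rfl⟩ : ∃ x, 0 ≤ x ∧ ENNReal.ofReal x = a :=
    ⟨a.toReal, ENNReal.toReal_nonneg, ENNReal.ofReal_toReal ha⟩
  obtain ⟨y, hy, rfl⟩ : ∃ y, 0 ≤ y ∧ ENNReal.ofReal y = b :=
    ⟨b.toReal, ENNReal.toReal_nonneg, ENNReal.ofReal_toReal hb⟩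
  rw [ENNReal.toReal_ofReal hx, ENNReal.toReal_ofReal hy, ← ENNReal.ofReal_mul hx,
    ← ENNReal.ofReal_ofNat 2, ← ENNReal.ofReal_mul zero_le_two, ← ENNReal.ofReal_pow hx,
    ← ENNReal.ofReal_pow hy, ← ENNReal.ofReal_add (by positivity) (by positivity),
    ← ENNReal.ofReal_add (by positivity) (by positivity), Real.rpow_two, sq_abs]
  ring_nf

theorem lintegral_exp_neg_mul_pow_div_factorial_Ioi (k : ℕ) :
    ∫⁻ t in Ioi (0 : ℝ), ENNReal.ofReal (Real.exp (-t) * t ^ k / k.factorial) = 1 := by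
  have hΓ : (fun t : ℝ => Real.exp (-t) * t ^ ((k : ℝ) + 1 - 1)) =
      fun t => Real.exp (-t) * t ^ k := by
    ext t; norm_num [Real.rpow_natCast]
  have hint : IntegrableOn (fun t : ℝ => Real.exp (-t) * t ^ k) (Ioi 0) := by
    simpa only [hΓ] using Real.GammaIntegral_convergent (s := k + 1) (by positivity)
  have hval : ∫ t in Ioi (0 : ℝ), Real.exp (-t) * t ^ k = k.factorial := by
    rw [← hΓ, ← Real.Gamma_eq_integral (by positivity), Real.Gamma_nat_eq_factorial]
  rw [← ofReal_integral_eq_lintegral_ofReal (hint.div_const _), integral_div, hval,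
    div_self (by positivity), ENNReal.ofReal_one]
  filter_upwards [ae_restrict_mem measurableSet_Ioi] with t (ht : 0 < t)
  positivity

theorem ProbabilityTheory.Kernel.IsReversible.map_swap_compProd {α : Type*}
    [MeasurableSpace α] {κ : Kernel α α} [IsMarkovKernel κ] {π : Measure α} [SigmaFinite π]
    (h : κ.IsReversible π) : (π ⊗ₘ κ).map Prod.swap = π ⊗ₘ κ := by
  let S := π.toFiniteSpanningSetsIn
  refine Measure.FiniteSpanningSetsIn.ext generateFrom_prod.symm isPiSystem_prod
    ⟨fun n => univ ×ˢ S.set n, fun n => mem_image2_of_mem MeasurableSet.univ (S.set_mem n),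
      fun n => ?_, ?_⟩ ?_
  · rw [Measure.map_apply measurable_swap (MeasurableSet.univ.prod (S.set_mem n)),
      preimage_swap_prod, Measure.compProd_apply_prod (S.set_mem n) .univ]
    simpa using S.finite n
  · rw [← prod_iUnion, S.spanning, univ_prod_univ]
  · rintro _ ⟨A, hA, B, hB, rfl⟩
    rw [Measure.map_apply measurable_swap (hA.prod hB), preimage_swap_prod,
      Measure.compProd_apply_prod hB hA, Measure.compProd_apply_prod hA hB, h hB hA]

theorem ProbabilityTheory.Kernel.IsReversible.lintegral_lintegral_swap {α : Type*}
    [MeasurableSpace α] {κ : Kernel α α} [IsMarkovKernel κ] {π : Measure α} [SigmaFinite π]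
    (h : κ.IsReversible π) {F : α → α → ℝ≥0∞} (hF : Measurable (Function.uncurry F)) :
    ∫⁻ x, ∫⁻ y, F x y ∂κ x ∂π = ∫⁻ x, ∫⁻ y, F y x ∂κ x ∂π := by
  calc ∫⁻ x, ∫⁻ y, F x y ∂κ x ∂π = ∫⁻ p, Function.uncurry F p ∂(π ⊗ₘ κ) :=
        (Measure.lintegral_compProd hF).symm
    _ = ∫⁻ p, Function.uncurry F p.swap ∂(π ⊗ₘ κ) := by
        rw [← MeasureTheory.lintegral_map hF measurable_swap, h.map_swap_compProd]
    _ = ∫⁻ x, ∫⁻ y, F y x ∂κ x ∂π := Measure.lintegral_compProd (hF.comp measurable_swap)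

namespace RandomWalkSpace

variable {X : Type*} [MeasurableSpace X] {m : X → Measure X} {ν : Measure X} {Ω : Set X}

noncomputable def IsRandomWalk.kernel (hm : IsRandomWalk m) : Kernel X X :=
  ⟨m, Measure.measurable_measure.2 hm.2⟩

theorem IsRandomWalk.isMarkovKernel_kernel (hm : IsRandomWalk m) : IsMarkovKernel hm.kernel :=
  ⟨hm.1⟩

theorem IsRandomWalk.measurable_setLIntegral (hm : IsRandomWalk m) {A : Set X}
    (hA : MeasurableSet A) {F : X → X → ℝ≥0∞} (hF : Measurable (Function.uncurry F)) :
    Measurable fun x => ∫⁻ y in A, F x y ∂(m x) :=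
  haveI := hm.isMarkovKernel_kernel
  hF.setLIntegral_kernel_prod_right (κ := hm.kernel) hA

theorem measurableSet_mBoundary (hm : IsRandomWalk m) (hΩ : MeasurableSet Ω) :
    MeasurableSet (mBoundary m Ω) :=
  hΩ.compl.inter (measurableSet_lt measurable_const (hm.2 Ω hΩ))

theorem measurableSet_mClosure (hm : IsRandomWalk m) (hΩ : MeasurableSet Ω) :
    MeasurableSet (mClosure m Ω) :=
  hΩ.union (measurableSet_mBoundary hm hΩ)

theorem subset_mClosure : Ω ⊆ mClosure m Ω := subset_union_left

theorem setLIntegral_mClosure_of_forall_notMem_eq_zero {μ : Measure X} {g : X → ℝ≥0∞}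
    (hg : ∀ x ∉ Ω, g x = 0) : ∫⁻ x in mClosure m Ω, g x ∂μ = ∫⁻ x in Ω, g x ∂μ := by
  have hsupp : g.support ⊆ Ω := Function.support_subset_iff'.2 hg
  rw [setLIntegral_eq_of_support_subset hsupp,
    setLIntegral_eq_of_support_subset (hsupp.trans subset_mClosure)]

theorem lintegral_lintegral_indicator_mul_indicator {μ : Measure X} {A B : Set X}
    (hA : MeasurableSet A) (hB : MeasurableSet B) {ψ χ : X → ℝ≥0∞} (hχ : Measurable χ) :
    ∫⁻ x, ∫⁻ y, A.indicator ψ x * B.indicator χ y ∂(m x) ∂μ =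
      ∫⁻ x in A, ψ x * ∫⁻ y in B, χ y ∂(m x) ∂μ := by
  rw [← lintegral_indicator hA]
  refine lintegral_congr fun x => ?_
  rw [lintegral_const_mul _ (hχ.indicator hB), lintegral_indicator hB]
  by_cases hx : x ∈ A <;> simp [hx]

namespace Reversible

theorem isReversible_kernel (hm : IsRandomWalk m) (hrev : Reversible m ν) :
    hm.kernel.IsReversible ν :=
  fun _ _ hA hB => hrev _ _ hA hB

theorem setLIntegral_mul_setLIntegral_comm (hm : IsRandomWalk m) (hrev : Reversible m ν)
    [SigmaFinite ν] {A B : Set X} (hA : MeasurableSet A) (hB : MeasurableSet B)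
    {ψ χ : X → ℝ≥0∞} (hψ : Measurable ψ) (hχ : Measurable χ) :
    ∫⁻ x in A, ψ x * ∫⁻ y in B, χ y ∂(m x) ∂ν = ∫⁻ x in B, χ x * ∫⁻ y in A, ψ y ∂(m x) ∂ν := by
  have := hm.isMarkovKernel_kernel
  rw [← lintegral_lintegral_indicator_mul_indicator hA hB hχ,
    ← lintegral_lintegral_indicator_mul_indicator hB hA hψ]
  have hF : Measurable (Function.uncurry fun x y => A.indicator ψ x * B.indicator χ y) :=
    ((hψ.indicator hA).comp measurable_fst).mul ((hχ.indicator hB).comp measurable_snd)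
  exact ((hrev.isReversible_kernel hm).lintegral_lintegral_swap hF).trans
    (lintegral_congr fun x => lintegral_congr fun y => mul_comm _ _)

theorem ae_ae_restrict_of_ae_restrict (hm : IsRandomWalk m) (hrev : Reversible m ν)
    {A B : Set X} (hA : MeasurableSet A) (hB : MeasurableSet B) {p : X → Prop}
    (h : ∀ᵐ y ∂ν.restrict B, p y) :
    ∀ᵐ x ∂ν.restrict A, ∀ᵐ y ∂(m x).restrict B, p y := by
  rw [ae_iff, Measure.restrict_apply' hB] at h
  obtain ⟨E, hNE, hE, hνE⟩ := exists_measurable_superset_of_null h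
  have hE0 : ∫⁻ x in A, m x E ∂ν = 0 := by
    rw [hrev A E hA hE, Measure.restrict_eq_zero.2 hνE, lintegral_zero_measure]
  filter_upwards [(lintegral_eq_zero_iff (hm.2 E hE)).1 hE0] with x hx
  rw [ae_iff, Measure.restrict_apply' hB]
  exact measure_mono_null hNE hx

theorem ae_measure_mClosure_eq_one (hm : IsRandomWalk m) (hrev : Reversible m ν)
    (hΩ : MeasurableSet Ω) :
    ∀ᵐ x ∂ν.restrict Ω, m x (mClosure m Ω) = 1 := by
  have hΩm := measurableSet_mClosure hm hΩ
  have hout : ∫⁻ x in Ω, m x (mClosure m Ω)ᶜ ∂ν = 0 := by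
    rw [hrev Ω _ hΩ hΩm.compl, setLIntegral_congr_fun hΩm.compl (g := fun _ => 0),
      lintegral_zero]
    intro x hx
    by_contra hne
    exact hx (Or.inr ⟨fun h => hx (Or.inl h), pos_iff_ne_zero.2 hne⟩)
  filter_upwards [(lintegral_eq_zero_iff (hm.2 _ hΩm.compl)).1 hout] with x hx
  have := hm.1 x
  exact (prob_compl_eq_zero_iff hΩm).1 hx

end Reversible

noncomputable def killedOp (m : X → Measure X) (Ω : Set X) (ψ : X → ℝ≥0∞) (x : X) : ℝ≥0∞ :=
  ∫⁻ y in Ω, ψ y ∂(m x)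

theorem measurable_killedOp (hm : IsRandomWalk m) (hΩ : MeasurableSet Ω) {ψ : X → ℝ≥0∞}
    (hψ : Measurable ψ) : Measurable (killedOp m Ω ψ) :=
  hm.measurable_setLIntegral hΩ (hψ.comp measurable_snd)

theorem measurable_iterate_killedOp (hm : IsRandomWalk m) (hΩ : MeasurableSet Ω)
    {ψ : X → ℝ≥0∞} (hψ : Measurable ψ) (n : ℕ) : Measurable ((killedOp m Ω)^[n] ψ) := by
  induction n with
  | zero => exact hψ
  | succ n ih => rw [Function.iterate_succ_apply']; exact measurable_killedOp hm hΩ ih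

theorem killedOp_mono : Monotone (killedOp m Ω) :=
  fun _ _ h _ => lintegral_mono fun y => h y

theorem killedOp_add {ψ : X → ℝ≥0∞} (hψ : Measurable ψ) (χ : X → ℝ≥0∞) :
    killedOp m Ω (ψ + χ) = killedOp m Ω ψ + killedOp m Ω χ :=
  funext fun _ => lintegral_add_left hψ χ

theorem iterate_killedOp_add (hm : IsRandomWalk m) (hΩ : MeasurableSet Ω) {ψ : X → ℝ≥0∞}
    (hψ : Measurable ψ) (χ : X → ℝ≥0∞) (n : ℕ) :
    (killedOp m Ω)^[n] (ψ + χ) = (killedOp m Ω)^[n] ψ + (killedOp m Ω)^[n] χ := by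
  induction n with
  | zero => rfl
  | succ n ih =>
    simp only [Function.iterate_succ_apply', ih,
      killedOp_add (measurable_iterate_killedOp hm hΩ hψ n)]

theorem Reversible.killedOp_congr_ae (hm : IsRandomWalk m) (hrev : Reversible m ν)
    (hΩ : MeasurableSet Ω) {ψ χ : X → ℝ≥0∞} (h : ψ =ᵐ[ν.restrict Ω] χ) :
    killedOp m Ω ψ =ᵐ[ν.restrict Ω] killedOp m Ω χ := by
  filter_upwards [hrev.ae_ae_restrict_of_ae_restrict hm hΩ hΩ h] with x hx
  exact lintegral_congr_ae hx

theorem Reversible.iterate_killedOp_congr_ae (hm : IsRandomWalk m) (hrev : Reversible m ν)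
    (hΩ : MeasurableSet Ω) {ψ χ : X → ℝ≥0∞} (h : ψ =ᵐ[ν.restrict Ω] χ) (n : ℕ) :
    (killedOp m Ω)^[n] ψ =ᵐ[ν.restrict Ω] (killedOp m Ω)^[n] χ := by
  induction n with
  | zero => exact h
  | succ n ih =>
    simp only [Function.iterate_succ_apply']
    exact hrev.killedOp_congr_ae hm hΩ ih

theorem Reversible.setLIntegral_killedOp_mul (hm : IsRandomWalk m) (hrev : Reversible m ν)
    [SigmaFinite ν] (hΩ : MeasurableSet Ω) {ψ χ : X → ℝ≥0∞} (hψ : Measurable ψ)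
    (hχ : Measurable χ) :
    ∫⁻ x in Ω, killedOp m Ω ψ x * χ x ∂ν = ∫⁻ x in Ω, ψ x * killedOp m Ω χ x ∂ν := by
  simp_rw [mul_comm (killedOp m Ω ψ _)]
  exact (hrev.setLIntegral_mul_setLIntegral_comm hm hΩ hΩ hψ hχ).symm

theorem Reversible.setLIntegral_iterate_killedOp_mul (hm : IsRandomWalk m)
    (hrev : Reversible m ν) [SigmaFinite ν] (hΩ : MeasurableSet Ω) {ψ χ : X → ℝ≥0∞}
    (hψ : Measurable ψ) (hχ : Measurable χ) (n : ℕ) :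
    ∫⁻ x in Ω, (killedOp m Ω)^[n] ψ x * χ x ∂ν = ∫⁻ x in Ω, ψ x * (killedOp m Ω)^[n] χ x ∂ν := by
  induction n generalizing χ with
  | zero => rfl
  | succ n ih =>
    rw [Function.iterate_succ_apply', Function.iterate_succ_apply,
      hrev.setLIntegral_killedOp_mul hm hΩ (measurable_iterate_killedOp hm hΩ hψ n) hχ,
      ih (measurable_killedOp hm hΩ hχ)]

theorem survival_eq_iterate_killedOp (n : ℕ) : survival m Ω n = (killedOp m Ω)^[n] 1 := by
  induction n with
  | zero => rfl
  | succ n ih => rw [Function.iterate_succ_apply', ← ih]; rfl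

theorem measurable_survival (hm : IsRandomWalk m) (hΩ : MeasurableSet Ω) (n : ℕ) :
    Measurable (survival m Ω n) := by
  rw [survival_eq_iterate_killedOp]
  exact measurable_iterate_killedOp hm hΩ measurable_const n

theorem antitone_survival (hm : IsRandomWalk m) : Antitone (survival m Ω) := by
  refine antitone_nat_of_succ_le fun n => ?_
  induction n with
  | zero =>
    intro x
    have := hm.1 x
    simpa [survival] using prob_le_one
  | succ n ih => exact killedOp_mono ih

theorem killedOp_iInf_survival (hm : IsRandomWalk m) (hΩ : MeasurableSet Ω) :
    killedOp m Ω (fun x => ⨅ n, survival m Ω n x) = fun x => ⨅ n, survival m Ω n x := by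
  funext x
  have := hm.1 x
  rw [killedOp, lintegral_iInf (measurable_survival hm hΩ) (antitone_survival hm)
    (by simp [survival])]
  have hshift := congrFun ((antitone_survival (Ω := Ω) hm).iInf_nat_add 1) x
  simp only [iInf_apply] at hshift
  exact hshift

/-- The identity `E(σ) = 2 ∫_Ω σ (σ - P σ)`, with the subtraction moved across so that it holds
in `ℝ≥0∞`. -/
theorem Reversible.energy_add_two_mul_setLIntegral_mul_killedOp (hm : IsRandomWalk m)
    (hrev : Reversible m ν) [SigmaFinite ν] (hΩ : MeasurableSet Ω) {σ : X → ℝ≥0∞}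
    (hσ : Measurable σ) (hσ_top : ∀ x, σ x ≠ ⊤) (hσ_zero : ∀ x ∉ Ω, σ x = 0) :
    energy m ν Ω 2 (fun x => (σ x).toReal) + 2 * ∫⁻ x in Ω, σ x * killedOp m Ω σ x ∂ν =
      2 * ∫⁻ x in Ω, σ x ^ 2 ∂ν := by
  have hΩm := measurableSet_mClosure hm hΩ
  have hF : Measurable (Function.uncurry fun x y =>
      ENNReal.ofReal (|(σ y).toReal - (σ x).toReal| ^ (2 : ℝ))) :=
    (((hσ.ennreal_toReal.comp measurable_snd).sub
      (hσ.ennreal_toReal.comp measurable_fst)).abs.pow_const _).ennreal_ofReal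
  have hFx : ∀ x, Measurable fun y =>
      ENNReal.ofReal (|(σ y).toReal - (σ x).toReal| ^ (2 : ℝ)) :=
    fun _ => ((hσ.ennreal_toReal.sub measurable_const).abs.pow_const _).ennreal_ofReal
  have hinner : ∀ x, ∫⁻ y in mClosure m Ω,
      ENNReal.ofReal (|(σ y).toReal - (σ x).toReal| ^ (2 : ℝ)) ∂(m x) +
        2 * (σ x * killedOp m Ω σ x) =
      σ x ^ 2 * m x (mClosure m Ω) + ∫⁻ y in mClosure m Ω, σ y ^ 2 ∂(m x) := fun x => by
    rw [killedOp, ← setLIntegral_mClosure_of_forall_notMem_eq_zero (m := m) hσ_zero,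
      ← lintegral_const_mul _ hσ, ← lintegral_const_mul _ (hσ.const_mul _),
      ← lintegral_add_left (hFx x), ← setLIntegral_const, ← lintegral_add_left measurable_const]
    exact lintegral_congr fun y =>
      ENNReal.ofReal_abs_toReal_sub_rpow_two_add (hσ_top x) (hσ_top y)
  have hsym : ∫⁻ x in mClosure m Ω, ∫⁻ y in mClosure m Ω, σ y ^ 2 ∂(m x) ∂ν =
      ∫⁻ x in mClosure m Ω, σ x ^ 2 * m x (mClosure m Ω) ∂ν := by
    simpa only [one_mul, setLIntegral_one] using hrev.setLIntegral_mul_setLIntegral_comm hm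
      hΩm hΩm (ψ := fun _ => 1) measurable_const (hσ.pow_const 2)
  have hdiag : ∫⁻ x in mClosure m Ω, σ x ^ 2 * m x (mClosure m Ω) ∂ν =
      ∫⁻ x in Ω, σ x ^ 2 ∂ν := by
    rw [setLIntegral_mClosure_of_forall_notMem_eq_zero fun x hx => by simp [hσ_zero x hx]]
    refine lintegral_congr_ae ?_
    filter_upwards [hrev.ae_measure_mClosure_eq_one hm hΩ] with x hx
    rw [hx, mul_one]
  calc energy m ν Ω 2 (fun x => (σ x).toReal) + 2 * ∫⁻ x in Ω, σ x * killedOp m Ω σ x ∂ν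
      = ∫⁻ x in mClosure m Ω, (∫⁻ y in mClosure m Ω,
          ENNReal.ofReal (|(σ y).toReal - (σ x).toReal| ^ (2 : ℝ)) ∂(m x) +
            2 * (σ x * killedOp m Ω σ x)) ∂ν := by
        rw [lintegral_add_left (hm.measurable_setLIntegral hΩm hF),
          lintegral_const_mul (f := fun x => σ x * killedOp m Ω σ x) _
            (hσ.mul (measurable_killedOp hm hΩ hσ)),
          setLIntegral_mClosure_of_forall_notMem_eq_zero (g := fun x => σ x * killedOp m Ω σ x)
            fun x hx => by simp [hσ_zero x hx]]
        rfl
    _ = 2 * ∫⁻ x in Ω, σ x ^ 2 ∂ν := by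
        rw [lintegral_congr hinner,
          lintegral_add_left (f := fun x => σ x ^ 2 * m x (mClosure m Ω))
            ((hσ.pow_const 2).mul (hm.2 _ hΩm)), hsym, hdiag, two_mul]

theorem PoincareInequality.ae_eq_zero_of_energy_eq_zero (hm : IsRandomWalk m)
    (hΩ : MeasurableSet Ω) (hfin : ν (mClosure m Ω) < ⊤) (hpoinc : PoincareInequality m ν Ω 2)
    {σ : X → ℝ≥0∞} (hσ : Measurable σ) {C : NNReal} (hσ_le : ∀ x, σ x ≤ C)
    (hσ_zero : ∀ x ∉ Ω, σ x = 0) (henergy : energy m ν Ω 2 (fun x => (σ x).toReal) = 0) :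
    ∀ᵐ x ∂ν.restrict Ω, σ x = 0 := by
  obtain ⟨lam, hlam, hP⟩ := hpoinc
  have hσ_top : ∀ x, σ x ≠ ⊤ := fun x => ne_top_of_le_ne_top ENNReal.coe_ne_top (hσ_le x)
  have hLp0 : InLp0 m ν Ω 2 (fun x => (σ x).toReal) := by
    have : IsFiniteMeasure (ν.restrict (mClosure m Ω)) := ⟨by rwa [Measure.restrict_apply_univ]⟩
    refine ⟨MemLp.of_bound hσ.ennreal_toReal.aestronglyMeasurable C (ae_of_all _ fun x => ?_), ?_⟩
    · rw [Real.norm_of_nonneg ENNReal.toReal_nonneg]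
      exact ENNReal.toReal_le_coe_of_le_coe (hσ_le x)
    · filter_upwards [ae_restrict_mem (measurableSet_mBoundary hm hΩ)] with x hx
      simp [hσ_zero x hx.1]
  have hsq : ∀ x, ENNReal.ofReal (|(σ x).toReal| ^ (2 : ℝ)) = σ x ^ 2 := fun x => by
    rw [Real.rpow_two, sq_abs, ENNReal.ofReal_pow ENNReal.toReal_nonneg,
      ENNReal.ofReal_toReal (hσ_top x)]
  have hzero := hP _ hLp0
  simp_rw [hsq, henergy, nonpos_iff_eq_zero, mul_eq_zero, ENNReal.ofReal_eq_zero,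
    not_le.2 hlam, false_or, lintegral_eq_zero_iff (hσ.pow_const 2)] at hzero
  filter_upwards [hzero] with x hx
  exact pow_eq_zero_iff two_ne_zero |>.1 hx

theorem iInf_survival_ae_eq_zero (hm : IsRandomWalk m) (hrev : Reversible m ν) [SigmaFinite ν]
    (hΩ : MeasurableSet Ω) (hfin : ν (mClosure m Ω) < ⊤)
    (hpoinc : PoincareInequality m ν Ω 2) :
    ∀ᵐ x ∂ν.restrict Ω, ⨅ n, survival m Ω n x = 0 := by
  set s := fun x => ⨅ n, survival m Ω n x
  have hs : Measurable s := Measurable.iInf (measurable_survival hm hΩ)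
  set σ := Ω.indicator s
  have hσ : Measurable σ := hs.indicator hΩ
  have hσ_Ω : ∀ x ∈ Ω, σ x = s x := fun x hx => indicator_of_mem hx s
  have hσ_zero : ∀ x ∉ Ω, σ x = 0 := fun x hx => indicator_of_notMem hx s
  have hσ_le : ∀ x, σ x ≤ (1 : NNReal) := fun x => by
    by_cases hx : x ∈ Ω
    · exact (hσ_Ω x hx).trans_le (iInf_le (fun n => survival m Ω n x) 0)
    · simp [hσ_zero x hx]
  have hσ_top : ∀ x, σ x ≠ ⊤ := fun x => ne_top_of_le_ne_top ENNReal.coe_ne_top (hσ_le x)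
  have hI_fin : ∫⁻ x in Ω, σ x ^ 2 ∂ν ≠ ⊤ := by
    have hI_le : ∫⁻ x in Ω, σ x ^ 2 ∂ν ≤ ν Ω := by
      simpa using lintegral_mono (μ := ν.restrict Ω) fun x =>
        pow_le_one₀ zero_le (by simpa using hσ_le x)
    exact (hI_le.trans_lt ((measure_mono subset_mClosure).trans_lt hfin)).ne
  have hharmonic : ∫⁻ x in Ω, σ x * killedOp m Ω σ x ∂ν = ∫⁻ x in Ω, σ x ^ 2 ∂ν := by
    have hPσ : killedOp m Ω σ = s :=
      (funext fun x => setLIntegral_congr_fun hΩ hσ_Ω).trans (killedOp_iInf_survival hm hΩ)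
    refine setLIntegral_congr_fun hΩ fun x hx => ?_
    rw [hPσ, sq, hσ_Ω x hx]
  have henergy : energy m ν Ω 2 (fun x => (σ x).toReal) = 0 := by
    have h := hrev.energy_add_two_mul_setLIntegral_mul_killedOp hm hΩ hσ hσ_top hσ_zero
    rw [hharmonic] at h
    exact (ENNReal.add_left_inj (ENNReal.mul_ne_top ENNReal.ofNat_ne_top hI_fin)).1
      (h.trans (zero_add _).symm)
  filter_upwards [hpoinc.ae_eq_zero_of_energy_eq_zero hm hΩ hfin hσ hσ_le hσ_zero henergy,
    ae_restrict_mem hΩ] with x hx hxΩ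
  rwa [hσ_Ω x hxΩ] at hx

theorem setLIntegral_iterate_killedOp_eq_sum_gseq_add (hm : IsRandomWalk m)
    (hrev : Reversible m ν) (hΩ : MeasurableSet Ω) {φ : X → ℝ≥0∞}
    (hfix : φ =ᵐ[ν.restrict Ω] 1 + killedOp m Ω φ) (n : ℕ) :
    ∫⁻ x in Ω, φ x ∂ν = ∑ k ∈ Finset.range n, gseq m ν Ω k +
      ∫⁻ x in Ω, (killedOp m Ω)^[n] φ x ∂ν := by
  induction n with
  | zero => simp
  | succ n ih =>
    have hstep : (killedOp m Ω)^[n] φ =ᵐ[ν.restrict Ω]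
        survival m Ω n + (killedOp m Ω)^[n + 1] φ := by
      rw [survival_eq_iterate_killedOp, Function.iterate_succ_apply,
        ← iterate_killedOp_add hm hΩ measurable_one]
      exact hrev.iterate_killedOp_congr_ae hm hΩ hfix n
    rw [ih, Finset.sum_range_succ, add_assoc, lintegral_congr_ae hstep, Pi.add_def,
      lintegral_add_left (measurable_survival hm hΩ n)]
    rfl

theorem setLIntegral_iterate_killedOp_eq_setLIntegral_mul_survival (hm : IsRandomWalk m)
    (hrev : Reversible m ν) [SigmaFinite ν] (hΩ : MeasurableSet Ω) {φ : X → ℝ≥0∞}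
    (hφ : Measurable φ) (n : ℕ) :
    ∫⁻ x in Ω, (killedOp m Ω)^[n] φ x ∂ν = ∫⁻ x in Ω, φ x * survival m Ω n x ∂ν := by
  simpa [survival_eq_iterate_killedOp] using
    hrev.setLIntegral_iterate_killedOp_mul hm hΩ hφ measurable_const n (χ := 1)

theorem setLIntegral_eq_tsum_gseq (hm : IsRandomWalk m) (hrev : Reversible m ν) [SigmaFinite ν]
    (hΩ : MeasurableSet Ω) {φ : X → ℝ≥0∞} (hφ : Measurable φ) (hφ_top : ∀ x, φ x ≠ ⊤)
    (hφ_fin : ∫⁻ x in Ω, φ x ∂ν ≠ ⊤) (hfix : φ =ᵐ[ν.restrict Ω] 1 + killedOp m Ω φ)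
    (hsurv : ∀ᵐ x ∂ν.restrict Ω, ⨅ n, survival m Ω n x = 0) :
    ∫⁻ x in Ω, φ x ∂ν = ∑' k, gseq m ν Ω k := by
  refine (ENNReal.tsum_eq_of_eq_sum_range_add
    (setLIntegral_iterate_killedOp_eq_sum_gseq_add hm hrev hΩ hfix) ?_).symm
  simp_rw [setLIntegral_iterate_killedOp_eq_setLIntegral_mul_survival hm hrev hΩ hφ]
  rw [← lintegral_iInf (f := fun n x => φ x * survival m Ω n x)
    (fun n => hφ.mul (measurable_survival hm hΩ n))
    (fun a b hab x => mul_le_mul_right (antitone_survival hm hab x) _) (by simpa [survival])]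
  refine (lintegral_congr_ae ?_).trans lintegral_zero
  filter_upwards [hsurv] with x hx
  rw [← ENNReal.mul_iInf fun h => absurd h (hφ_top x), hx, mul_zero]

namespace IsStressFunction

variable {f : X → ℝ}

theorem exists_ennreal_ae_eq (hm : IsRandomWalk m) (hΩ : MeasurableSet Ω)
    (hf : IsStressFunction m ν Ω f) :
    ∃ φ : X → ℝ≥0∞, Measurable φ ∧ (∀ x, φ x ≠ ⊤) ∧ (∀ x ∉ Ω, φ x = 0) ∧
      f =ᵐ[ν.restrict (mClosure m Ω)] fun x => (φ x).toReal := by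
  have hf_meas := hf.1.1.aestronglyMeasurable
  refine ⟨Ω.indicator fun x => ENNReal.ofReal (hf_meas.mk f x),
    (hf_meas.stronglyMeasurable_mk.measurable.ennreal_ofReal).indicator hΩ,
    fun x => ?_, fun x hx => indicator_of_notMem hx _, ?_⟩
  · by_cases hx : x ∈ Ω <;> simp [hx]
  have hbd := (ae_restrict_iff' (measurableSet_mBoundary hm hΩ)).1 hf.1.2
  filter_upwards [hf_meas.ae_eq_mk, hf.2.1, ae_restrict_mem (measurableSet_mClosure hm hΩ),
    ae_restrict_of_ae hbd] with x hx_mk hx_nonneg hx_mem hx_bd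
  by_cases hx : x ∈ Ω
  · simp [hx, ← hx_mk, ENNReal.toReal_ofReal hx_nonneg]
  · simp [hx, hx_bd (hx_mem.resolve_left hx)]

variable {φ : X → ℝ≥0∞}

theorem ofReal_setIntegral_eq_setLIntegral (hfin : ν (mClosure m Ω) < ⊤)
    (hf : IsStressFunction m ν Ω f) (hφ_top : ∀ x, φ x ≠ ⊤)
    (hfφ : f =ᵐ[ν.restrict (mClosure m Ω)] fun x => (φ x).toReal) :
    ENNReal.ofReal (∫ x in Ω, f x ∂ν) = ∫⁻ x in Ω, φ x ∂ν := by
  have : IsFiniteMeasure (ν.restrict (mClosure m Ω)) := ⟨by rwa [Measure.restrict_apply_univ]⟩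
  have hfφ_Ω := ae_restrict_of_ae_restrict_of_subset subset_mClosure hfφ
  have hint : Integrable f (ν.restrict Ω) :=
    (hf.1.1.integrable (by norm_num)).mono_measure (Measure.restrict_mono subset_mClosure le_rfl)
  rw [integral_congr_ae hfφ_Ω, ofReal_integral_eq_lintegral_ofReal (hint.congr hfφ_Ω)
    (ae_of_all _ fun _ => ENNReal.toReal_nonneg)]
  simp_rw [ENNReal.ofReal_toReal (hφ_top _)]

theorem ae_eq_one_add_killedOp (hm : IsRandomWalk m) (hrev : Reversible m ν)
    (hΩ : MeasurableSet Ω) (hf : IsStressFunction m ν Ω f) (hφ_top : ∀ x, φ x ≠ ⊤)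
    (hφ_zero : ∀ x ∉ Ω, φ x = 0)
    (hfφ : f =ᵐ[ν.restrict (mClosure m Ω)] fun x => (φ x).toReal) :
    φ =ᵐ[ν.restrict Ω] 1 + killedOp m Ω φ := by
  have hΩm := measurableSet_mClosure hm hΩ
  filter_upwards [hf.2.2, hrev.ae_ae_restrict_of_ae_restrict hm hΩ hΩm hfφ,
    ae_restrict_of_ae_restrict_of_subset subset_mClosure hfφ,
    hrev.ae_measure_mClosure_eq_one hm hΩ] with x hx_eq (hx_ae : f =ᵐ[_] _) hfx hx_one
  have : IsProbabilityMeasure ((m x).restrict (mClosure m Ω)) :=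
    ⟨by rwa [Measure.restrict_apply_univ]⟩
  have hint : Integrable (fun y => f y - f x) ((m x).restrict (mClosure m Ω)) := by
    by_contra h
    rw [integral_undef h] at hx_eq
    norm_num at hx_eq
  have hint_φ : Integrable (fun y => (φ y).toReal) ((m x).restrict (mClosure m Ω)) :=
    ((hint.add (integrable_const (f x))).congr
      (ae_of_all _ fun y => sub_add_cancel (f y) (f x))).congr hx_ae
  have hmean : f x = 1 + ∫ y in mClosure m Ω, (φ y).toReal ∂(m x) := by
    rw [integral_sub (hint_φ.congr hx_ae.symm) (integrable_const _), integral_const,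
      integral_congr_ae hx_ae, probReal_univ, one_smul] at hx_eq
    linarith
  calc φ x = ENNReal.ofReal (f x) := by rw [hfx, ENNReal.ofReal_toReal (hφ_top x)]
    _ = 1 + ∫⁻ y in mClosure m Ω, ENNReal.ofReal (φ y).toReal ∂(m x) := by
      rw [hmean, ENNReal.ofReal_add zero_le_one (integral_nonneg fun _ => ENNReal.toReal_nonneg),
        ENNReal.ofReal_one,
        ofReal_integral_eq_lintegral_ofReal hint_φ (ae_of_all _ fun _ => ENNReal.toReal_nonneg)]
    _ = (1 + killedOp m Ω φ) x := by
      simp_rw [ENNReal.ofReal_toReal (hφ_top _),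
        setLIntegral_mClosure_of_forall_notMem_eq_zero hφ_zero]
      rfl

end IsStressFunction

theorem lintegral_heatContent_Ioi (m : X → Measure X) (ν : Measure X) (Ω : Set X) :
    ∫⁻ t in Ioi (0 : ℝ), heatContent m ν Ω t = ∑' k, gseq m ν Ω k := by
  have hmeas : ∀ k : ℕ, Measurable fun t : ℝ =>
      ENNReal.ofReal (Real.exp (-t) * t ^ k / k.factorial) := fun k => by fun_prop
  simp only [heatContent]
  rw [lintegral_tsum fun k => ((hmeas k).const_mul _).aemeasurable]
  simp_rw [lintegral_const_mul _ (hmeas _), lintegral_exp_neg_mul_pow_div_factorial_Ioi,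
    mul_one]

end RandomWalkSpace

theorem torsion_eq_heatContent_integral_general {X : Type*} [MeasurableSpace X]
    (m : X → Measure X) (ν : Measure X) [SigmaFinite ν]
    (hm : RandomWalkSpace.IsRandomWalk m) (hrev : RandomWalkSpace.Reversible m ν)
    (Ω : Set X) (hΩ : MeasurableSet Ω)
    (h2 : ν (RandomWalkSpace.mClosure m Ω) < ⊤)
    (hpoinc : RandomWalkSpace.PoincareInequality m ν Ω 2)
    (f : X → ℝ) (hf : RandomWalkSpace.IsStressFunction m ν Ω f) :
    ENNReal.ofReal (∫ x in Ω, f x ∂ν) =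
        ∫⁻ t in Set.Ioi (0 : ℝ), RandomWalkSpace.heatContent m ν Ω t ∧
      ENNReal.ofReal (∫ x in Ω, f x ∂ν) = ∑' k : ℕ, RandomWalkSpace.gseq m ν Ω k := by
  obtain ⟨φ, hφ, hφ_top, hφ_zero, hfφ⟩ := hf.exists_ennreal_ae_eq hm hΩ
  have htorsion : ENNReal.ofReal (∫ x in Ω, f x ∂ν) = ∫⁻ x in Ω, φ x ∂ν :=
    hf.ofReal_setIntegral_eq_setLIntegral h2 hφ_top hfφ
  have hseries : ∫⁻ x in Ω, φ x ∂ν = ∑' k, RandomWalkSpace.gseq m ν Ω k :=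
    RandomWalkSpace.setLIntegral_eq_tsum_gseq hm hrev hΩ hφ hφ_top
      (htorsion ▸ ENNReal.ofReal_ne_top) (hf.ae_eq_one_add_killedOp hm hrev hΩ hφ_top hφ_zero hfφ)
      (RandomWalkSpace.iInf_survival_ae_eq_zero hm hrev hΩ h2 hpoinc)
  rw [RandomWalkSpace.lintegral_heatContent_Ioi, htorsion, hseries]
  exact ⟨rfl, rfl⟩

/-- `T_m(Ω) = ∫_0^∞ Q_Ω^m(t) dt` and `T_m(Ω) = Σ_k g_{m,Ω}(k)`. -/
theorem torsion_eq_heatContent_integral {X : Type*} [MeasurableSpace X]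
    (m : X → Measure X) (ν : Measure X) [SigmaFinite ν]
    (hm : RandomWalkSpace.IsRandomWalk m) (hrev : RandomWalkSpace.Reversible m ν)
    (Ω : Set X) (hΩ : MeasurableSet Ω)
    (hconn : RandomWalkSpace.mConnected m ν Ω)
    (hconnm : RandomWalkSpace.mConnected m ν (RandomWalkSpace.mClosure m Ω))
    (h0 : 0 < ν Ω) (h1 : ν Ω < ν (RandomWalkSpace.mClosure m Ω))
    (h2 : ν (RandomWalkSpace.mClosure m Ω) < ⊤)
    (hpoinc : RandomWalkSpace.PoincareInequality m ν Ω 2)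
    (f : X → ℝ) (hf : RandomWalkSpace.IsStressFunction m ν Ω f) :
    ENNReal.ofReal (∫ x in Ω, f x ∂ν) =
        ∫⁻ t in Set.Ioi (0 : ℝ), RandomWalkSpace.heatContent m ν Ω t ∧
      ENNReal.ofReal (∫ x in Ω, f x ∂ν) = ∑' k : ℕ, RandomWalkSpace.gseq m ν Ω k :=
  torsion_eq_heatContent_integral_general m ν hm hrev Ω hΩ h2 hpoinc f hf
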